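/- The polynomial sequence {J_n(z,y)}_{n≥0}, where J_n(z,y) = ∑_{k=0}^n JS(n,k;z) y^k, is strongly {z,y}-log-convex: for all 1 ≤ m ≤ n, the bivariate polynomial J_{m-1}(z,y)·J_{n+1}(z,y) − J_m(z,y)·J_n(z,y) has nonnegative coefficients. -/

import Mathlib

open Polynomial Finset

/-- The Jacobi-Stirling numbers of the second kind `JS(n,k;z)`, as polynomials in `z`. -/
noncomputable def JS : ℕ → ℕ → Polynomial ℤ
  | 0, 0 => 1
  | 0, _+1 => 0
  | _+1, 0 => 0
  | n+1, k+1 => JS n k + (C ((k : ℤ) + 1) * (C ((k : ℤ) + 1) + X)) * JS n (k+1)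

/-- `J_n(z,y) = ∑_{k=0}^n JS(n,k;z) y^k`, a polynomial in `y` with coefficients in `ℤ[z]`. -/
noncomputable def J (n : ℕ) : Polynomial (Polynomial ℤ) :=
  ∑ k ∈ Finset.range (n + 1), C (JS n k) * X ^ k

/-!
The Jacobi-Stirling triangle is the triangle `T(n,k) = T(n-1,k-1) + c_k T(n-1,k)` with weights
`c_k = k(k+z)`, which are nonnegative and increasing with respect to the cone `P` of polynomials
with nonnegative coefficients (`c_l - c_k = (l-k)(l+k+z)`). By induction on the rows, every
`2 × 2` minor `T(a,i) T(b,j) - T(a,j) T(b,i)` with `a ≤ b`, `i ≤ j` lies in `P` (the triangle is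
`TP₂`).
The row polynomials satisfy `R_{n+1} = y R_n + D R_n` with `D y^k = c_k y^k`, so
`R_a R_{n+1} - R_{a+1} R_n = R_a · D R_n - D R_a · R_n`, whose `y^i`-coefficient is
`∑_{u+v=i} (c_v - c_u) T(a,u) T(n,v)`. Pairing the terms `(u,v)` and `(v,u)` for `u < v` gives
`(c_v - c_u) (T(a,u) T(n,v) - T(a,v) T(n,u))`, a product of two elements of `P`.
-/

theorem Finset.Nat.sum_antidiagonal_mem_of_add_swap_mem {M S : Type*} [AddCommMonoid M]
    [SetLike S M] [AddSubmonoidClass S M] {P : S} {f : ℕ × ℕ → M} (hdiag : ∀ u, f (u, u) ∈ P)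
    (hswap : ∀ u v, u < v → f (u, v) + f (v, u) ∈ P) (n : ℕ) :
    ∑ p ∈ antidiagonal n, f p ∈ P := by
  induction n using Nat.twoStepInduction generalizing f with
  | zero => simpa using hdiag 0
  | one => simpa [antidiagonal_succ] using hswap 0 1 one_pos
  | more n ih _ =>
    rw [Nat.antidiagonal_succ_succ', sum_cons, sum_cons, sum_map, ← add_assoc]
    exact add_mem (hswap 0 (n + 2) (by omega))
      (ih (fun u => hdiag (u + 1)) fun u v h => hswap (u + 1) (v + 1) (by omega))

namespace Polynomial

variable (R : Type*) [Semiring R] [PartialOrder R] [IsOrderedRing R]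

def nonnegCoeffs : Subsemiring R[X] where
  carrier := {p | ∀ n, 0 ≤ p.coeff n}
  mul_mem' {p q} hp hq n := by
    rw [coeff_mul]
    exact sum_nonneg fun x _ => mul_nonneg (hp x.1) (hq x.2)
  one_mem' n := by
    rw [coeff_one]
    split_ifs <;> simp
  add_mem' {p q} hp hq n := by
    rw [coeff_add]
    exact add_nonneg (hp n) (hq n)
  zero_mem' n := by simp

variable {R}

theorem C_mem_nonnegCoeffs {a : R} (ha : 0 ≤ a) : C a ∈ nonnegCoeffs R := fun n => by
  rw [coeff_C]
  split_ifs <;> simp [ha]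

theorem X_mem_nonnegCoeffs : (X : R[X]) ∈ nonnegCoeffs R := fun n => by
  rw [coeff_X]
  split_ifs <;> simp

theorem coeff_sum_range_C_mul_X_pow {S : Type*} [Semiring S] {f : ℕ → S} {n : ℕ}
    (hf : ∀ k, n < k → f k = 0) (k : ℕ) :
    (∑ i ∈ range (n + 1), C (f i) * X ^ i).coeff k = f k := by
  simp only [finsetSum_coeff, coeff_C_mul_X_pow]
  rw [sum_ite_eq]
  split_ifs with hk
  · rfl
  · exact (hf k (by simpa using hk)).symm

end Polynomial

section StirlingTriangle

variable {A : Type*} [CommRing A] (c : ℕ → A)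

def stirlingTriangle : ℕ → ℕ → A
  | 0, 0 => 1
  | 0, _ + 1 => 0
  | n + 1, 0 => c 0 * stirlingTriangle n 0
  | n + 1, k + 1 => stirlingTriangle n k + c (k + 1) * stirlingTriangle n (k + 1)

@[simp]
theorem stirlingTriangle_zero_zero : stirlingTriangle c 0 0 = 1 := rfl

@[simp]
theorem stirlingTriangle_zero_succ (k : ℕ) : stirlingTriangle c 0 (k + 1) = 0 := rfl

theorem stirlingTriangle_succ_zero (n : ℕ) :
    stirlingTriangle c (n + 1) 0 = c 0 * stirlingTriangle c n 0 := rfl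

theorem stirlingTriangle_succ_succ (n k : ℕ) :
    stirlingTriangle c (n + 1) (k + 1) =
      stirlingTriangle c n k + c (k + 1) * stirlingTriangle c n (k + 1) := rfl

theorem stirlingTriangle_eq_zero_of_lt {n k : ℕ} (h : n < k) : stirlingTriangle c n k = 0 := by
  induction n generalizing k with
  | zero => obtain ⟨k, rfl⟩ := Nat.exists_eq_add_of_le' (Nat.one_le_of_lt h); rfl
  | succ n ih =>
    obtain ⟨k, rfl⟩ := Nat.exists_eq_add_of_le' (Nat.one_le_of_lt h)
    rw [stirlingTriangle_succ_succ, ih (by omega), ih (by omega), mul_zero, add_zero]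

variable {c} {P : Subsemiring A}

theorem stirlingTriangle_mem (hc : ∀ k, c k ∈ P) (n k : ℕ) : stirlingTriangle c n k ∈ P := by
  induction n generalizing k with
  | zero => cases k <;> simp [zero_mem, one_mem]
  | succ n ih =>
    cases k with
    | zero => exact mul_mem (hc 0) (ih 0)
    | succ k => exact add_mem (ih k) (mul_mem (hc _) (ih _))

theorem stirlingTriangle_minor_mem (hc : ∀ k, c k ∈ P) {a b : ℕ} (hab : a ≤ b) {i j : ℕ}
    (hij : i ≤ j) :
    stirlingTriangle c a i * stirlingTriangle c b j -
      stirlingTriangle c a j * stirlingTriangle c b i ∈ P := by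
  induction a generalizing b i j with
  | zero =>
    rcases i with _ | i
    · rcases j with _ | j
      · simp [zero_mem]
      · simpa using stirlingTriangle_mem hc b (j + 1)
    · obtain ⟨j, rfl⟩ := Nat.exists_eq_add_of_le' (by omega : 1 ≤ j)
      simp [zero_mem]
  | succ a ih =>
    obtain ⟨b, rfl⟩ := Nat.exists_eq_add_of_le' (by omega : 1 ≤ b)
    rcases hij.eq_or_lt with rfl | hij
    · simp [zero_mem]
    obtain ⟨j, rfl⟩ := Nat.exists_eq_add_of_le' (Nat.one_le_of_lt hij)
    replace hab : a ≤ b := by omega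
    rcases i with _ | i
    · convert add_mem (mul_mem (hc 0) (ih hab (Nat.zero_le j)))
        (mul_mem (mul_mem (hc 0) (hc (j + 1))) (ih hab (Nat.zero_le (j + 1)))) using 1
      simp only [stirlingTriangle_succ_zero, stirlingTriangle_succ_succ]
      ring
    · convert add_mem (add_mem (add_mem (ih hab (by omega : i ≤ j))
        (mul_mem (hc (j + 1)) (ih hab (by omega : i ≤ j + 1))))
        (mul_mem (hc (i + 1)) (ih hab (by omega : i + 1 ≤ j))))
        (mul_mem (mul_mem (hc (i + 1)) (hc (j + 1))) (ih hab (by omega : i + 1 ≤ j + 1)))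
        using 1
      simp only [stirlingTriangle_succ_succ]
      ring

end StirlingTriangle

section StirlingRow

variable {A : Type*} [CommRing A] (c : ℕ → A)

noncomputable def stirlingRow (n : ℕ) : A[X] :=
  ∑ k ∈ range (n + 1), C (stirlingTriangle c n k) * X ^ k

noncomputable def weightedStirlingRow (n : ℕ) : A[X] :=
  ∑ k ∈ range (n + 1), C (c k * stirlingTriangle c n k) * X ^ k

theorem coeff_stirlingRow (n k : ℕ) : (stirlingRow c n).coeff k = stirlingTriangle c n k :=
  coeff_sum_range_C_mul_X_pow (fun _ h => stirlingTriangle_eq_zero_of_lt c h) k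

theorem coeff_weightedStirlingRow (n k : ℕ) :
    (weightedStirlingRow c n).coeff k = c k * stirlingTriangle c n k :=
  coeff_sum_range_C_mul_X_pow
    (fun _ h => by rw [stirlingTriangle_eq_zero_of_lt c h, mul_zero]) k

theorem stirlingRow_succ (n : ℕ) :
    stirlingRow c (n + 1) = X * stirlingRow c n + weightedStirlingRow c n := by
  ext k
  rw [coeff_add, coeff_stirlingRow, coeff_weightedStirlingRow]
  rcases k with _ | k
  · rw [mul_coeff_zero, coeff_X_zero, zero_mul, zero_add, stirlingTriangle_succ_zero]
  · rw [coeff_X_mul, coeff_stirlingRow, stirlingTriangle_succ_succ]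

variable {c} {P : Subsemiring A}

theorem coeff_stirlingRow_mul_succ_sub_succ_mul_mem (hc : ∀ k, c k ∈ P)
    (hmono : ∀ k l, k ≤ l → c l - c k ∈ P) {a n : ℕ} (han : a ≤ n) (i : ℕ) :
    (stirlingRow c a * stirlingRow c (n + 1) - stirlingRow c (a + 1) * stirlingRow c n).coeff i
      ∈ P := by
  have hdiff : stirlingRow c a * stirlingRow c (n + 1) - stirlingRow c (a + 1) * stirlingRow c n
      = stirlingRow c a * weightedStirlingRow c n - weightedStirlingRow c a * stirlingRow c n := by
    rw [stirlingRow_succ, stirlingRow_succ]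
    ring
  rw [hdiff, coeff_sub, coeff_mul, coeff_mul, ← sum_sub_distrib]
  refine Nat.sum_antidiagonal_mem_of_add_swap_mem (fun u => ?_) (fun u v huv => ?_) i
  · convert zero_mem P using 1
    simp only [coeff_stirlingRow, coeff_weightedStirlingRow]
    ring
  · convert mul_mem (hmono u v huv.le) (stirlingTriangle_minor_mem hc han huv.le) using 1
    simp only [coeff_stirlingRow, coeff_weightedStirlingRow]
    ring

end StirlingRow

noncomputable def jacobiStirlingWeight (k : ℕ) : ℤ[X] := C (k : ℤ) * (C (k : ℤ) + X)

theorem JS_eq_stirlingTriangle : JS = stirlingTriangle jacobiStirlingWeight := by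
  ext1 n
  induction n with
  | zero => ext1 k; cases k <;> rfl
  | succ n ih =>
    ext1 k
    rcases k with _ | k
    · simp [JS, stirlingTriangle_succ_zero, jacobiStirlingWeight]
    · rw [JS, stirlingTriangle_succ_succ, ← ih, jacobiStirlingWeight]
      push_cast
      rfl

theorem J_eq_stirlingRow : J = stirlingRow jacobiStirlingWeight := by
  ext1 n
  rw [J, stirlingRow, JS_eq_stirlingTriangle]

theorem jacobiStirlingWeight_mem_nonnegCoeffs (k : ℕ) :
    jacobiStirlingWeight k ∈ nonnegCoeffs ℤ :=
  mul_mem (C_mem_nonnegCoeffs k.cast_nonneg)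
    (add_mem (C_mem_nonnegCoeffs k.cast_nonneg) X_mem_nonnegCoeffs)

theorem jacobiStirlingWeight_sub_mem_nonnegCoeffs {k l : ℕ} (hkl : k ≤ l) :
    jacobiStirlingWeight l - jacobiStirlingWeight k ∈ nonnegCoeffs ℤ := by
  have hfactor : jacobiStirlingWeight l - jacobiStirlingWeight k
      = C ((l : ℤ) - k) * (C ((l : ℤ) + k) + X) := by
    simp only [jacobiStirlingWeight, C_sub, C_add]
    ring
  rw [hfactor]
  exact mul_mem (C_mem_nonnegCoeffs (by omega))
    (add_mem (C_mem_nonnegCoeffs (by omega)) X_mem_nonnegCoeffs)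

/-- The sequence `{J_n(z,y)}_{n≥0}` is strongly `{z,y}`-log-convex: for `1 ≤ m ≤ n`,
the bivariate polynomial `J_{m-1}·J_{n+1} − J_m·J_n` has nonnegative coefficients. -/
theorem J_strongly_log_convex (m n : ℕ) (hm : 1 ≤ m) (hmn : m ≤ n) (i j : ℕ) :
    0 ≤ ((J (m - 1) * J (n + 1) - J m * J n).coeff i).coeff j := by
  obtain ⟨a, rfl⟩ := Nat.exists_eq_add_of_le' hm
  rw [Nat.add_sub_cancel, J_eq_stirlingRow]
  exact coeff_stirlingRow_mul_succ_sub_succ_mul_mem jacobiStirlingWeight_mem_nonnegCoeffs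
    (fun _ _ => jacobiStirlingWeight_sub_mem_nonnegCoeffs) (by omega) i j
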